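/- arXiv:math/0405591 — 2 statements merged into one kernel-verified Lean document; each statement's English description precedes it below -/
import Mathlib

section
/- For every natural number n and every q, x in a commutative ring, x^n = ∑_{k=0}^{n} [n choose k]_q · φ_k(x), where φ_k(x) = ∏_{i=0}^{k-1} (x - q^i). -/
open Polynomial

/-- The Gaussian (q-binomial) coefficient as a polynomial in `q`. -/
noncomputable def qbinom : ℕ → ℕ → Polynomial ℤ
  | _, 0 => 1
  | 0, _ + 1 => 0
  | n + 1, k + 1 => qbinom n k + X ^ (k + 1) * qbinom n (k + 1)

open Finset

/-!
Multiplying by `x` shifts the basis `φ_k`: `x φ_k = φ_{k+1} + q^k φ_k`. Hence if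
`x^n = ∑ [n choose k]_q φ_k`, then `x^{n+1} = ∑ ([n choose k-1]_q + q^k [n choose k]_q) φ_k`,
and the coefficients are those of the q-Pascal recurrence defining `[n+1 choose k]_q`.
-/

lemma qbinom_eq_zero_of_lt : ∀ {n k : ℕ}, n < k → qbinom n k = 0
  | _, 0, h => absurd h (Nat.not_lt_zero _)
  | 0, _ + 1, _ => rfl
  | n + 1, k + 1, h => by
    rw [qbinom, qbinom_eq_zero_of_lt (by omega : n < k), qbinom_eq_zero_of_lt (by omega : n < k + 1)]
    ring

section Evaluation

variable {R : Type*} [CommRing R] (q x : R)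

noncomputable def qbinomEval (n k : ℕ) : R := (qbinom n k).eval₂ (Int.castRingHom R) q

def qPhi (k : ℕ) : R := ∏ i ∈ range k, (x - q ^ i)

@[simp]
lemma qbinomEval_zero_right (n : ℕ) : qbinomEval q n 0 = 1 := by
  cases n <;> simp [qbinomEval, qbinom]

lemma qbinomEval_succ_succ (n k : ℕ) :
    qbinomEval q (n + 1) (k + 1) = qbinomEval q n k + q ^ (k + 1) * qbinomEval q n (k + 1) := by
  simp only [qbinomEval, qbinom, eval₂_add, eval₂_mul, eval₂_X_pow]

lemma qbinomEval_eq_zero_of_lt {n k : ℕ} (h : n < k) : qbinomEval q n k = 0 := by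
  simp [qbinomEval, qbinom_eq_zero_of_lt h]

@[simp]
lemma qPhi_zero : qPhi q x 0 = 1 := prod_range_zero _

lemma mul_qPhi (k : ℕ) : x * qPhi q x k = qPhi q x (k + 1) + q ^ k * qPhi q x k := by
  rw [qPhi, qPhi, prod_range_succ]
  ring

lemma mul_sum_qbinomEval_mul_qPhi (n : ℕ) :
    x * ∑ k ∈ range (n + 1), qbinomEval q n k * qPhi q x k =
      ∑ k ∈ range (n + 2), qbinomEval q (n + 1) k * qPhi q x k := by
  have hshift : x * ∑ k ∈ range (n + 1), qbinomEval q n k * qPhi q x k =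
      ∑ k ∈ range (n + 1), qbinomEval q n k * qPhi q x (k + 1) +
        ∑ k ∈ range (n + 1), q ^ k * qbinomEval q n k * qPhi q x k := by
    rw [mul_sum, ← sum_add_distrib]
    refine sum_congr rfl fun k _ => ?_
    linear_combination qbinomEval q n k * mul_qPhi q x k
  -- The top coefficient `[n choose n+1]_q` vanishes, so the second sum may be reindexed from `1`.
  have hreindex : ∑ k ∈ range (n + 1), q ^ k * qbinomEval q n k * qPhi q x k =
      ∑ k ∈ range (n + 1), q ^ (k + 1) * qbinomEval q n (k + 1) * qPhi q x (k + 1) + 1 :=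
    calc ∑ k ∈ range (n + 1), q ^ k * qbinomEval q n k * qPhi q x k
        = ∑ k ∈ range (n + 2), q ^ k * qbinomEval q n k * qPhi q x k := by
          rw [sum_range_succ _ (n + 1), qbinomEval_eq_zero_of_lt q (Nat.lt_succ_self n)]
          ring
      _ = _ := by simp [sum_range_succ' _ (n + 1)]
  rw [hshift, hreindex, sum_range_succ' _ (n + 1), qbinomEval_zero_right, qPhi_zero, mul_one,
    ← add_assoc, ← sum_add_distrib]
  congr 1
  refine sum_congr rfl fun k _ => ?_
  rw [qbinomEval_succ_succ]
  ring

end Evaluation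

theorem pow_eq_sum_qbinom_phi (R : Type*) [CommRing R] (q x : R) (n : ℕ) :
    x ^ n = ∑ k ∈ Finset.range (n + 1),
      ((qbinom n k).eval₂ (Int.castRingHom R) q) * ∏ i ∈ Finset.range k, (x - q ^ i) := by
  change x ^ n = ∑ k ∈ range (n + 1), qbinomEval q n k * qPhi q x k
  induction n with
  | zero => simp
  | succ n ih => rw [pow_succ', ih, mul_sum_qbinomEval_mul_qPhi]
end

section
/- For nonnegative integers m and n, the polynomial identity q^{nm} = ∑_{k=0}^{m} [m choose k]_q · ∏_{i=0}^{k-1}(q^n - q^i) holds in q; it is obtained by specializing x = q^n in the expansion x^m = ∑_{k=0}^{m} [m choose k]_q φ_k(x). -/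
open Polynomial

lemma qbinom_eq_zero : ∀ n k : ℕ, n < k → qbinom n k = 0
  | _, 0, h => absurd h (by omega)
  | 0, _ + 1, _ => rfl
  | n + 1, k + 1, h => by
    rw [qbinom, qbinom_eq_zero n k (by omega), qbinom_eq_zero n (k + 1) (by omega)]
    ring

theorem qpow_expansion (n m : ℕ) :
    (X : Polynomial ℤ) ^ (n * m) =
      ∑ k ∈ Finset.range (m + 1),
        qbinom m k * ∏ i ∈ Finset.range k, ((X : Polynomial ℤ) ^ n - X ^ i) := by
  induction m with
  | zero => simp [qbinom]
  | succ m ih =>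
    set φ : ℕ → Polynomial ℤ := fun k => ∏ i ∈ Finset.range k, ((X : Polynomial ℤ) ^ n - X ^ i)
      with hφ
    have hstep : ∀ k, (X : Polynomial ℤ) ^ n * φ k = φ (k + 1) + X ^ k * φ k := by
      intro k
      rw [hφ]
      simp only [Finset.prod_range_succ]
      ring
    have hLHS : (X : Polynomial ℤ) ^ (n * (m + 1)) =
        ∑ k ∈ Finset.range (m + 1), (qbinom m k * φ (k + 1) + X ^ k * qbinom m k * φ k) := by
      rw [Nat.mul_succ, pow_add, ih, Finset.sum_mul]
      refine Finset.sum_congr rfl fun k _ => ?_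
      have := hstep k
      calc qbinom m k * φ k * X ^ n = qbinom m k * (X ^ n * φ k) := by ring
        _ = qbinom m k * (φ (k + 1) + X ^ k * φ k) := by rw [this]
        _ = qbinom m k * φ (k + 1) + X ^ k * qbinom m k * φ k := by ring
    rw [hLHS, Finset.sum_add_distrib]
    -- RHS: peel off first term and use the recursion
    rw [Finset.sum_range_succ' (fun k => qbinom (m + 1) k * φ k)]
    have hrec : ∀ i, qbinom (m + 1) (i + 1) = qbinom m i + X ^ (i + 1) * qbinom m (i + 1) :=
      fun i => rfl
    have h0 : qbinom (m + 1) 0 * φ 0 = 1 := by simp [qbinom, hφ]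
    rw [h0]
    have hsplit : ∑ i ∈ Finset.range (m + 1), qbinom (m + 1) (i + 1) * φ (i + 1) =
        ∑ i ∈ Finset.range (m + 1), qbinom m i * φ (i + 1) +
        ∑ i ∈ Finset.range (m + 1), X ^ (i + 1) * qbinom m (i + 1) * φ (i + 1) := by
      rw [← Finset.sum_add_distrib]
      refine Finset.sum_congr rfl fun i _ => ?_
      rw [hrec i]; ring
    rw [hsplit]
    -- second sums match after shifting
    have hshift : ∑ k ∈ Finset.range (m + 1), X ^ k * qbinom m k * φ k =
        ∑ i ∈ Finset.range (m + 1), X ^ (i + 1) * qbinom m (i + 1) * φ (i + 1) + 1 := by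
      rw [Finset.sum_range_succ' (fun k => X ^ k * qbinom m k * φ k)]
      rw [Finset.sum_range_succ (fun i => X ^ (i + 1) * qbinom m (i + 1) * φ (i + 1))]
      rw [qbinom_eq_zero m (m + 1) (by omega)]
      simp [qbinom, hφ]
    rw [hshift]
    ring
end
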